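/- Let A be a bicomplete abelian category (having all small limits and colimits), and let (𝒳, 𝒴) be a cotorsion pair of chain complexes over A, meaning 𝒳 = { X : Ext^1(X,Y) = 0 for all Y ∈ 𝒴 } and 𝒴 = { Y : Ext^1(X,Y) = 0 for all X ∈ 𝒳 }, where Ext^1 is computed in the abelian category Ch(A) of chain complexes over A. Let 𝒞 be a class of objects of A. If the sphere complexes S^n(C) lie in 𝒴 for every integer n and every C ∈ 𝒞, then every bounded above chain complex all of whose components lie in 𝒞 is also in 𝒴. -/

import Mathlib

/-!
STATEMENT 6: Let `A` be a bicomplete abelian category and `(𝒳, 𝒴)` a cotorsion pair in the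
category of `ℤ`-indexed chain complexes over `A` (each class is the `Ext¹`-orthogonal of the
other, `Ext¹` computed in `Ch(A)`).  Let `𝒞` be a class of objects of `A`.  If `S^n C ∈ 𝒴`
for all `n : ℤ` and `C ∈ 𝒞`, then every bounded above complex with components in `𝒞` is in `𝒴`.

The vanishing of the (Yoneda) group `Ext¹(A, B)` is expressed by the (equivalent)
statement that every short exact sequence `0 → B → E → A → 0` splits.
-/

universe v u

open CategoryTheory Limits

/-- Vanishing of (Yoneda) `Ext¹(A, B)` in an abelian category: every short exact
sequence `0 → B → E → A → 0` splits. -/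
def Ext1Vanishes {C : Type*} [Category C] [Abelian C] (A B : C) : Prop :=
  ∀ (E : C) (f : B ⟶ E) (g : E ⟶ A) (w : f ≫ g = 0),
    (ShortComplex.mk f g w).ShortExact → ∃ s : A ⟶ E, s ≫ g = 𝟙 A

variable (A : Type u) [Category.{v} A] [Abelian A]

/-- The sphere complex `S^n C`: `C` concentrated in degree `n`. -/
noncomputable def sphere (n : ℤ) (C : A) : ChainComplex A ℤ :=
  (HomologicalComplex.single A (ComplexShape.down ℤ) n).obj C

/-!
A splitting of `0 → X → E → K → 0` is built degree by degree, downwards. Above the bound of `X`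
the map `E → K` is an isomorphism, so its inverse is forced. To extend a section `s'` from degree
`n + 1` to degree `n`, replace `K_n` by `E_n` in `K`, with differential `s' ≫ d` into it: this is
an extension of `K` by the sphere `S^n(X_n)`, and a splitting of it is exactly a section in degree
`n` compatible with `s'`.
-/

namespace Int

noncomputable def downwardRec {α : ℤ → Sort*} (N : ℤ) (top : ∀ n, N < n → α n)
    (step : ∀ n, n ≤ N → α (n + 1) → α n) (n : ℤ) : α n :=
  if h : N < n then top n h else step n (not_lt.1 h) (downwardRec N top step (n + 1))
termination_by (N + 1 - n).toNat

section DownwardRec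

variable {α : ℤ → Sort*} {N : ℤ} {top : ∀ n, N < n → α n} {step : ∀ n, n ≤ N → α (n + 1) → α n}

theorem downwardRec_of_lt {n : ℤ} (h : N < n) : downwardRec N top step n = top n h := by
  rw [downwardRec, dif_pos h]

theorem downwardRec_of_le {n : ℤ} (h : n ≤ N) :
    downwardRec N top step n = step n h (downwardRec N top step (n + 1)) := by
  rw [downwardRec, dif_neg (not_lt.2 h)]

end DownwardRec

theorem exists_forall_rel_of_downward {α : ℤ → Sort*} (R : ∀ n, α (n + 1) → α n → Prop) (N : ℤ)
    (top : ∀ n, N < n → α n)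
    (htop : ∀ n (h : N < n), R n (top (n + 1) (lt_add_one_iff.2 h.le)) (top n h))
    (hstep : ∀ n ≤ N, ∀ a, ∃ b, R n a b) :
    ∃ x : ∀ n, α n, ∀ n, R n (x (n + 1)) (x n) := by
  choose step hstep using hstep
  refine ⟨downwardRec N top step, fun n => ?_⟩
  rcases lt_or_ge N n with h | h
  · rw [downwardRec_of_lt h, downwardRec_of_lt]
    exact htop n h
  · rw [downwardRec_of_le h]
    exact hstep n h _

end Int

theorem HomologicalComplex.Hom.d_comp_inv_f {V : Type*} [Category V] [HasZeroMorphisms V]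
    {ι : Type*} {c : ComplexShape ι} {C₁ C₂ : HomologicalComplex V c} (f : C₁ ⟶ C₂) (i j : ι)
    [IsIso (f.f i)] [IsIso (f.f j)] : C₂.d i j ≫ inv (f.f j) = inv (f.f i) ≫ C₁.d i j := by
  rw [← cancel_epi (f.f i), ← cancel_mono (f.f j)]
  simp

namespace ChainComplex

lemma d_comp_comp_d_eq_zero {V : Type*} [Category V] [HasZeroMorphisms V]
    {K E : ChainComplex V ℤ} {n : ℤ} {s : K.X n ⟶ E.X n} {s' : K.X (n + 1) ⟶ E.X (n + 1)}
    (h : K.d (n + 1) n ≫ s = s' ≫ E.d (n + 1) n) (m j : ℤ) :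
    K.d m n ≫ s ≫ E.d n j = 0 := by
  by_cases hm : m = n + 1
  · subst hm
    rw [reassoc_of% h, E.d_comp_d, comp_zero]
  · rw [K.shape m n (by simp; omega), zero_comp]

theorem exists_section_of_extend_downward {V : Type*} [Category V] [HasZeroMorphisms V]
    {K E : ChainComplex V ℤ} (g : E ⟶ K) (N : ℤ) (hiso : ∀ n > N, IsIso (g.f n))
    (extend : ∀ n ≤ N, ∀ s' : K.X (n + 1) ⟶ E.X (n + 1), s' ≫ g.f (n + 1) = 𝟙 _ →
      (∀ m, K.d m (n + 1) ≫ s' ≫ E.d (n + 1) n = 0) →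
      ∃ s, s ≫ g.f n = 𝟙 _ ∧ K.d (n + 1) n ≫ s = s' ≫ E.d (n + 1) n) :
    ∃ σ : K ⟶ E, σ ≫ g = 𝟙 K := by
  -- the second condition is what makes the next extension step possible
  let α (n : ℤ) := {s : K.X n ⟶ E.X n // s ≫ g.f n = 𝟙 _ ∧ ∀ m j, K.d m n ≫ s ≫ E.d n j = 0}
  have inv_comm (n : ℤ) (h : N < n) : K.d (n + 1) n ≫ @inv _ _ _ _ (g.f n) (hiso n h) =
      @inv _ _ _ _ (g.f (n + 1)) (hiso (n + 1) (by omega)) ≫ E.d (n + 1) n :=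
    have := hiso n h
    have := hiso (n + 1) (by omega)
    g.d_comp_inv_f (n + 1) n
  obtain ⟨x, hx⟩ := Int.exists_forall_rel_of_downward
    (fun n (s' : α (n + 1)) (s : α n) => K.d (n + 1) n ≫ s.1 = s'.1 ≫ E.d (n + 1) n) N
    (fun n h => ⟨@inv _ _ _ _ (g.f n) (hiso n h), by simp, d_comp_comp_d_eq_zero (inv_comm n h)⟩)
    inv_comm
    (fun n hn s' => by
      obtain ⟨s, hs, hcomm⟩ := extend n hn s'.1 s'.2.1 fun m => s'.2.2 m n
      exact ⟨⟨s, hs, d_comp_comp_d_eq_zero hcomm⟩, hcomm⟩)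
  refine ⟨{ f := fun n => (x n).1, comm' := ?_ }, ?_⟩
  · rintro _ n rfl
    exact (hx n).symm
  · ext n
    exact (x n).2.1

section Replace

variable {A} (K : ChainComplex A ℤ) (n : ℤ)

def replaceX (Y : A) (m : ℤ) : A := if m = n then Y else K.X m

lemma replaceX_self (Y : A) : K.replaceX n Y n = Y := if_pos rfl

lemma replaceX_of_ne (Y : A) {m : ℤ} (h : m ≠ n) : K.replaceX n Y m = K.X m := if_neg h

variable {Y : A} (p : Y ⟶ K.X n) (a : K.X (n + 1) ⟶ Y)

noncomputable def replaceXProj (m : ℤ) : K.replaceX n Y m ⟶ K.X m :=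
  if h : m = n then eqToHom (by rw [h, replaceX_self]) ≫ p ≫ eqToHom (by rw [h])
  else eqToHom (K.replaceX_of_ne n Y h)

-- differential `a` into degree `n`, `p ≫ d` out of it
noncomputable def replaceD (i j : ℤ) : K.replaceX n Y i ⟶ K.replaceX n Y j :=
  if hj : j = n then
    if hi : i = n + 1 then
      eqToHom (by rw [hi, replaceX_of_ne _ _ _ (by omega)]) ≫ a ≫
        eqToHom (by rw [hj, replaceX_self])
    else 0
  else K.replaceXProj n p i ≫ K.d i j ≫ eqToHom (K.replaceX_of_ne n Y hj).symm

lemma replaceXProj_of_ne {m : ℤ} (h : m ≠ n) :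
    K.replaceXProj n p m = eqToHom (K.replaceX_of_ne n Y h) :=
  dif_neg h

lemma replaceXProj_self : K.replaceXProj n p n = eqToHom (K.replaceX_self n Y) ≫ p := by
  simp [replaceXProj]

lemma replaceD_succ_self : K.replaceD n p a (n + 1) n =
    eqToHom (K.replaceX_of_ne n Y (by omega)) ≫ a ≫ eqToHom (K.replaceX_self n Y).symm := by
  simp [replaceD]

lemma replaceD_of_ne {i j : ℤ} (hj : j ≠ n) :
    K.replaceD n p a i j =
      K.replaceXProj n p i ≫ K.d i j ≫ eqToHom (K.replaceX_of_ne n Y hj).symm :=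
  dif_neg hj

variable (ha : a ≫ p = K.d (n + 1) n) (hda : ∀ m, K.d m (n + 1) ≫ a = 0)

noncomputable abbrev replace : ChainComplex A ℤ where
  X := K.replaceX n Y
  d := K.replaceD n p a
  shape i j hij := by
    by_cases hj : j = n
    · subst hj
      rw [replaceD, dif_pos rfl, dif_neg (fun h => hij h.symm)]
    · simp [replaceD_of_ne _ _ _ _ hj, K.shape i j hij]
  d_comp_d' := by
    rintro i j k (rfl : j + 1 = i) (rfl : k + 1 = j)
    by_cases hk : k = n
    · subst hk
      simp [replaceD_of_ne, replaceD_succ_self, reassoc_of% hda]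
    by_cases hj : k + 1 = n
    · subst hj
      simp [replaceD_of_ne _ _ _ _ hk, replaceXProj_self, replaceD_succ_self, reassoc_of% ha]
    · simp [replaceD_of_ne _ _ _ _ hk, replaceD_of_ne _ _ _ _ hj, replaceXProj_of_ne _ _ _ hj]

noncomputable def replaceProj : K.replace n p a ha hda ⟶ K where
  f := K.replaceXProj n p
  comm' := by
    rintro i j (rfl : j + 1 = i)
    change _ = K.replaceD n p a _ _ ≫ _
    by_cases hj : j = n
    · subst hj
      simp [replaceD_succ_self, replaceXProj_self, replaceXProj_of_ne, ha]
    · simp [replaceD_of_ne _ _ _ _ hj, replaceXProj_of_ne _ _ _ hj]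

variable {C : A} (i : C ⟶ Y)

noncomputable def singleToReplace (hi : i ≫ p = 0) :
    (HomologicalComplex.single A (ComplexShape.down ℤ) n).obj C ⟶ K.replace n p a ha hda :=
  HomologicalComplex.mkHomFromSingle (i ≫ eqToHom (K.replaceX_self n Y).symm) (by
    intro j hj
    change _ ≫ K.replaceD n p a _ _ = 0
    rw [replaceD_of_ne _ _ _ _ (by change j + 1 = n at hj; omega), replaceXProj_self]
    simp [reassoc_of% hi])

variable (hi : i ≫ p = 0)

lemma replaceProj_f (m : ℤ) : (K.replaceProj n p a ha hda).f m = K.replaceXProj n p m := rfl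

lemma singleToReplace_f_self : (K.singleToReplace n p a ha hda i hi).f n =
    (HomologicalComplex.singleObjXSelf (ComplexShape.down ℤ) n C).hom ≫ i ≫
      eqToHom (K.replaceX_self n Y).symm :=
  HomologicalComplex.mkHomFromSingle_f _ _

lemma singleToReplace_comp_replaceProj :
    K.singleToReplace n p a ha hda i hi ≫ K.replaceProj n p a ha hda = 0 := by
  ext
  simpa [singleToReplace_f_self, replaceProj_f, replaceXProj_self] using hi

lemma replace_shortExact (hS : (ShortComplex.mk i p hi).ShortExact) :
    (ShortComplex.mk _ _ (K.singleToReplace_comp_replaceProj n p a ha hda i hi)).ShortExact := by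
  rw [HomologicalComplex.shortExact_iff_degreewise_shortExact]
  intro m
  by_cases hm : m = n
  · subst hm
    have hw := HomologicalComplex.congr_hom (K.singleToReplace_comp_replaceProj m p a ha hda i hi) m
    refine ShortComplex.shortExact_of_iso (S₂ := ShortComplex.mk _ _ hw) ?_ hS
    refine ShortComplex.isoMk (HomologicalComplex.singleObjXSelf (ComplexShape.down ℤ) m C).symm
      (eqToIso (K.replaceX_self m Y).symm) (Iso.refl _) ?_ ?_
    · simp [singleToReplace_f_self]
    · simp [replaceProj_f, replaceXProj_self]
  · refine (ShortComplex.Splitting.ofIsZeroOfIsIso _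
      (HomologicalComplex.isZero_single_obj_X (ComplexShape.down ℤ) n C m hm) ?_).shortExact
    change IsIso (K.replaceXProj n p m)
    rw [replaceXProj_of_ne _ _ _ hm]
    infer_instance

end Replace

variable {A}

theorem exists_section_of_ext1Vanishes_sphere {K : ChainComplex A ℤ} {n : ℤ} {Y C : A}
    {p : Y ⟶ K.X n} {a : K.X (n + 1) ⟶ Y} (ha : a ≫ p = K.d (n + 1) n)
    (hda : ∀ m, K.d m (n + 1) ≫ a = 0) (i : C ⟶ Y) (hi : i ≫ p = 0)
    (hS : (ShortComplex.mk i p hi).ShortExact) (hK : Ext1Vanishes K (sphere A n C)) :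
    ∃ t : K.X n ⟶ Y, t ≫ p = 𝟙 _ ∧ K.d (n + 1) n ≫ t = a := by
  obtain ⟨σ, hσ⟩ := hK _ _ _ _ (K.replace_shortExact n p a ha hda i hi hS)
  have hσπ (m : ℤ) : σ.f m ≫ K.replaceXProj n p m = 𝟙 _ := by
    rw [← replaceProj_f, ← HomologicalComplex.comp_f, hσ, HomologicalComplex.id_f]
  have hσ_succ : σ.f (n + 1) = eqToHom (K.replaceX_of_ne n Y (by omega)).symm := by
    have hne : n + 1 ≠ n := by omega
    rw [← cancel_mono (eqToHom (K.replaceX_of_ne n Y hne)), eqToHom_trans, eqToHom_refl,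
      ← replaceXProj_of_ne _ _ p hne, hσπ]
  refine ⟨σ.f n ≫ eqToHom (K.replaceX_self n Y), by simpa [replaceXProj_self] using hσπ n, ?_⟩
  rw [← reassoc_of% (σ.comm (n + 1) n), hσ_succ]
  simp [replaceD_succ_self]

theorem ext1Vanishes_of_bddAbove {K X : ChainComplex A ℤ} (N : ℤ) (hX : ∀ n > N, IsZero (X.X n))
    (hK : ∀ n, Ext1Vanishes K (sphere A n (X.X n))) : Ext1Vanishes K X := by
  intro E f g w hSES
  have hdeg := (HomologicalComplex.shortExact_iff_degreewise_shortExact _).1 hSES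
  refine exists_section_of_extend_downward g N (fun n hn => (hdeg n).isIso_g_iff.2 (hX n hn))
    fun n _ s' hs' hd => ?_
  exact exists_section_of_ext1Vanishes_sphere (by rw [Category.assoc, ← g.comm, reassoc_of% hs'])
    hd (f.f n) _ (hdeg n) (hK n)

end ChainComplex

theorem cotorsionPair_bddAbove_of_spheres
    (𝒳 𝒴 : Set (ChainComplex A ℤ))
    (h𝒳 : ∀ K, K ∈ 𝒳 ↔ ∀ L ∈ 𝒴, Ext1Vanishes K L)
    (h𝒴 : ∀ L, L ∈ 𝒴 ↔ ∀ K ∈ 𝒳, Ext1Vanishes K L)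
    (𝒞 : Set A)
    (hS : ∀ (n : ℤ) (C : A), C ∈ 𝒞 → sphere A n C ∈ 𝒴)
    (X : ChainComplex A ℤ) (hbdd : ∃ N : ℤ, ∀ n > N, IsZero (X.X n))
    (hcomp : ∀ n, X.X n ∈ 𝒞) :
    X ∈ 𝒴 := by
  obtain ⟨N, hN⟩ := hbdd
  refine (h𝒴 X).2 fun K hK => ChainComplex.ext1Vanishes_of_bddAbove N hN fun n => ?_
  exact (h𝒳 K).1 hK _ (hS n _ (hcomp n))
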